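/- arXiv:1104.0127 — 7 statements merged into one kernel-verified Lean document; each statement's English description precedes it below -/
import Mathlib

section
/- For each letter σ ∈ Σ set θ_σ = ψ(φ(σ)) and κ_σ = k^{-|φ(σ)|}, and define a 4×4 real matrix M_σ (rows and columns indexed by states 0,1,2,3) with row 0 = ((1/2)(1-θ_σ), (1/2)θ_σ, 1/2, 0), row 1 = ((1/2)(1-θ_σ-κ_σ), (1/2)(θ_σ+κ_σ), 1/2, 0), row 2 = (0,0,1,0), row 3 = (0,0,0,1). Then for every finite word w = σ₁…σ_n over Σ, the row vector e₀ · M_{σ₁} · M_{σ₂} · ⋯ · M_{σ_n} (where e₀ is the indicator row vector of state 0) equals (2^{-n}(1-θ(w)), 2^{-n}θ(w), 1-2^{-n}, 0). -/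
open Matrix

/-- `psi k (d₁ … d_n) = d_n/k + d_{n-1}/k² + ⋯ + d₁/kⁿ`. -/
noncomputable def psi (k : ℕ) (l : List (Fin k)) : ℝ :=
  l.foldl (fun r a => (r + (a : ℝ)) / k) 0

/-- `theta` of a word is `psi` of the concatenation of the images of its letters. -/
noncomputable def theta (k : ℕ) {S : Type*} (φ : S → List (Fin k)) (w : List S) : ℝ :=
  psi k (w.map φ).flatten

/-- The transition matrix `M_σ` of the automaton `A_i` from the PCP instance. -/
noncomputable def Mmat (k : ℕ) {S : Type*} (φ : S → List (Fin k)) (σ : S) :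
    Matrix (Fin 4) (Fin 4) ℝ :=
  !![(1/2) * (1 - psi k (φ σ)), (1/2) * psi k (φ σ), 1/2, 0;
     (1/2) * (1 - psi k (φ σ) - ((k : ℝ) ^ (φ σ).length)⁻¹),
       (1/2) * (psi k (φ σ) + ((k : ℝ) ^ (φ σ).length)⁻¹), 1/2, 0;
     0, 0, 1, 0;
     0, 0, 0, 1]

-- In `psi` the list `l` itself is coerced to `List ℝ` (through the list monad); this unfolds it
-- to a fold over the digits.
lemma psi_eq_foldl (k : ℕ) (l : List (Fin k)) :
    psi k l = l.foldl (fun r (a : Fin k) => (r + (a : ℝ)) / k) 0 := by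
  simp only [psi, bind_pure_comp, List.map_eq_map, List.foldl_map]

lemma foldl_eq_mul_add_psi (k : ℕ) (l : List (Fin k)) (r : ℝ) :
    l.foldl (fun r (a : Fin k) => (r + (a : ℝ)) / k) r = r * ((k : ℝ) ^ l.length)⁻¹ + psi k l := by
  induction l generalizing r with
  | nil => simp [psi]
  | cons a l ih =>
    have hcons : psi k (a :: l) = ((0 + (a : ℝ)) / k) * ((k : ℝ) ^ l.length)⁻¹ + psi k l := by
      rw [psi_eq_foldl, List.foldl_cons, ih]
    rw [List.foldl_cons, ih, hcons, List.length_cons]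
    ring

lemma psi_append (k : ℕ) (l₁ l₂ : List (Fin k)) :
    psi k (l₁ ++ l₂) = psi k l₁ * ((k : ℝ) ^ l₂.length)⁻¹ + psi k l₂ := by
  rw [psi_eq_foldl, List.foldl_append, ← psi_eq_foldl, foldl_eq_mul_add_psi]

lemma theta_append_singleton (k : ℕ) {S : Type*} (φ : S → List (Fin k)) (w : List S) (σ : S) :
    theta k φ (w ++ [σ]) = theta k φ w * ((k : ℝ) ^ (φ σ).length)⁻¹ + psi k (φ σ) := by
  simp only [theta, List.map_append, List.map_singleton, List.flatten_append,
    List.flatten_singleton, psi_append]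

lemma vecMul_Mmat (k : ℕ) {S : Type*} (φ : S → List (Fin k)) (σ : S) (s t : ℝ) :
    vecMul ![s * (1 - t), s * t, 1 - s, 0] (Mmat k φ σ) =
      ![s * 2⁻¹ * (1 - (t * ((k : ℝ) ^ (φ σ).length)⁻¹ + psi k (φ σ))),
        s * 2⁻¹ * (t * ((k : ℝ) ^ (φ σ).length)⁻¹ + psi k (φ σ)),
        1 - s * 2⁻¹, 0] := by
  ext i
  fin_cases i <;> simp [Mmat, vecMul, dotProduct, Fin.sum_univ_four] <;> ring

theorem stmt2_general (k : ℕ) (S : Type*) (φ : S → List (Fin k)) (w : List S) :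
    w.foldl (fun v σ => Matrix.vecMul v (Mmat k φ σ)) ![(1 : ℝ), 0, 0, 0] =
      ![((2 : ℝ) ^ w.length)⁻¹ * (1 - theta k φ w),
        ((2 : ℝ) ^ w.length)⁻¹ * theta k φ w,
        1 - ((2 : ℝ) ^ w.length)⁻¹, 0] := by
  induction w using List.reverseRecOn with
  | nil => simp [theta, psi]
  | append_singleton w σ ih =>
    rw [List.foldl_append, ih, List.foldl_cons, List.foldl_nil, vecMul_Mmat, theta_append_singleton,
      List.length_append, List.length_singleton, pow_succ, mul_inv]

theorem stmt2 (k : ℕ) (hk : 2 ≤ k) (S : Type*) (φ : S → List (Fin k)) (w : List S) :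
    w.foldl (fun v σ => Matrix.vecMul v (Mmat k φ σ)) ![(1 : ℝ), 0, 0, 0] =
      ![((2 : ℝ) ^ w.length)⁻¹ * (1 - theta k φ w),
        ((2 : ℝ) ^ w.length)⁻¹ * theta k φ w,
        1 - ((2 : ℝ) ^ w.length)⁻¹, 0] :=
  stmt2_general k S φ w
end

section
/- Let φ₁, φ₂ : Σ → List (Fin k) and let z ∈ ℕ satisfy |φ_i(σ)| ≤ z for all σ ∈ Σ and i ∈ {1,2}. Let θ_i(w) = ψ(φ_i(w)) for finite words w. Then for every finite word w over Σ, if θ₁(w) ≠ θ₂(w), then (2^{-|w|}·(θ₁(w) - θ₂(w)))² ≥ 1/k^{2·(z+1)·|w|}. -/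
/-!
Both values are `k`-adic fractions: `ψ(l) · k^|l|` is the natural number with digits `l`, so once
`|φᵢ(w)| ≤ z|w|` the difference `θ₁(w) - θ₂(w)` lies in `k^{-z|w|} ℤ`, and being nonzero it is at
least `k^{-z|w|}` in absolute value. The factor `2^{-|w|}` is absorbed by `2 ≤ k`.
-/

-- The coercion `(a : ℝ)` in `psi` elaborates as a monadic lift of the whole list to `List ℝ`.
lemma psi_eq_foldl_map (k : ℕ) (l : List (Fin k)) :
    psi k l = (l.map fun a : Fin k => ((a : ℕ) : ℝ)).foldl (fun r a : ℝ => (r + a) / k) 0 := by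
  simp only [psi, List.bind_eq_flatMap, List.pure_def, List.map_eq_flatMap]

lemma foldl_map_mul_pow_length {k : ℕ} (l : List (Fin k)) (x : ℝ) :
    (l.map fun a : Fin k => ((a : ℕ) : ℝ)).foldl (fun r a : ℝ => (r + a) / k) x *
        (k : ℝ) ^ l.length =
      x + Nat.ofDigits k (l.map Fin.val) := by
  induction l generalizing x with
  | nil => simp
  | cons a t ih =>
    have hk : (k : ℝ) ≠ 0 := by exact_mod_cast a.pos.ne'
    rw [List.map_cons, List.foldl_cons, List.length_cons, pow_succ, ← mul_assoc, ih,
      List.map_cons, Nat.ofDigits_cons]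
    push_cast
    field_simp
    ring

lemma psi_mul_pow_length {k : ℕ} (l : List (Fin k)) :
    psi k l * (k : ℝ) ^ l.length = Nat.ofDigits k (l.map Fin.val) := by
  rw [psi_eq_foldl_map, foldl_map_mul_pow_length, zero_add]

lemma exists_psi_mul_pow_eq_natCast {k m : ℕ} {l : List (Fin k)} (hl : l.length ≤ m) :
    ∃ N : ℕ, psi k l * (k : ℝ) ^ m = N :=
  ⟨Nat.ofDigits k (l.map Fin.val) * k ^ (m - l.length), by
    rw [← Nat.add_sub_cancel' hl, pow_add, ← mul_assoc, psi_mul_pow_length]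
    push_cast
    rw [Nat.add_sub_cancel_left]⟩

lemma one_le_abs_psi_sub_psi_mul_pow {k m : ℕ} (hk : 0 < k) {l₁ l₂ : List (Fin k)}
    (hne : psi k l₁ ≠ psi k l₂) (hl₁ : l₁.length ≤ m) (hl₂ : l₂.length ≤ m) :
    1 ≤ |(psi k l₁ - psi k l₂) * (k : ℝ) ^ m| := by
  obtain ⟨N₁, hN₁⟩ := exists_psi_mul_pow_eq_natCast hl₁
  obtain ⟨N₂, hN₂⟩ := exists_psi_mul_pow_eq_natCast hl₂
  have hpow : (k : ℝ) ^ m ≠ 0 := by positivity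
  have hN : (N₁ : ℤ) - N₂ ≠ 0 := by
    intro h
    apply hne
    have : psi k l₁ * (k : ℝ) ^ m = psi k l₂ * (k : ℝ) ^ m := by
      rw [hN₁, hN₂]
      exact_mod_cast sub_eq_zero.mp h
    exact mul_right_cancel₀ hpow this
  rw [sub_mul, hN₁, hN₂]
  exact_mod_cast Int.one_le_abs hN

lemma length_flatten_map_le {α β : Type*} {f : α → List β} {z : ℕ}
    (hf : ∀ a, (f a).length ≤ z) (w : List α) :
    (w.map f).flatten.length ≤ z * w.length := by
  rw [List.length_flatten, List.map_map, mul_comm, ← smul_eq_mul,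
    ← List.length_map (f := List.length ∘ f)]
  exact List.sum_le_card_nsmul _ _ (by simpa using fun a _ => hf a)

theorem stmt5 (k : ℕ) (hk : 2 ≤ k) (S : Type*) (φ₁ φ₂ : S → List (Fin k)) (z : ℕ)
    (hz₁ : ∀ σ : S, (φ₁ σ).length ≤ z) (hz₂ : ∀ σ : S, (φ₂ σ).length ≤ z)
    (w : List S) (hne : theta k φ₁ w ≠ theta k φ₂ w) :
    1 / (k : ℝ) ^ (2 * (z + 1) * w.length) ≤
      (((2 : ℝ) ^ w.length)⁻¹ * (theta k φ₁ w - theta k φ₂ w)) ^ 2 := by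
  set n := w.length
  set d := theta k φ₁ w - theta k φ₂ w
  have hsep : 1 ≤ |d * (k : ℝ) ^ (z * n)| :=
    one_le_abs_psi_sub_psi_mul_pow (by omega) hne (length_flatten_map_le hz₁ w)
      (length_flatten_map_le hz₂ w)
  have h2k : (2 : ℝ) ^ n ≤ (k : ℝ) ^ n := pow_le_pow_left₀ (by norm_num) (by exact_mod_cast hk) n
  rw [div_le_iff₀ (by positivity)]
  calc (1 : ℝ) ≤ (d * (k : ℝ) ^ (z * n)) ^ 2 := (one_le_sq_iff_one_le_abs _).mpr hsep
    _ = ((2 ^ n)⁻¹ * d) ^ 2 * (2 ^ n * (k : ℝ) ^ (z * n)) ^ 2 := by field_simp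
    _ ≤ ((2 ^ n)⁻¹ * d) ^ 2 * ((k : ℝ) ^ n * (k : ℝ) ^ (z * n)) ^ 2 := by gcongr
    _ = ((2 ^ n)⁻¹ * d) ^ 2 * (k : ℝ) ^ (2 * (z + 1) * n) := by ring
end

section
/- Let Σ be a finite nonempty alphabet, Q a finite type, M : Σ → Matrix Q Q ℝ a family of row-stochastic matrices, F ⊆ Q and q₀ ∈ F. If for every ε > 0 there exists an infinite word w : ℕ → Σ with Safe_F(w) > 1 - ε, then there exists an infinite word w : ℕ → Σ with Safe_F(w) = 1. (In other words, for safety automata the answer to the limit problem is yes if and only if the answer to the almost problem is yes.) -/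
/-!
Give the alphabet the discrete topology. Each `safeSeq · n` depends on finitely many letters,
so it is continuous on the compact space `ℕ → S` of infinite words; hence `safeVal`, their
infimum, is upper semicontinuous and attains its supremum, which is `1` by hypothesis.
-/

open Matrix Filter Topology

/-- The sub-stochastic matrix obtained from `M` by zeroing out all columns outside `F`. -/
noncomputable def subMat {Q : Type*} [DecidableEq Q] (M : Matrix Q Q ℝ) (F : Finset Q) :
    Matrix Q Q ℝ :=
  Matrix.of fun q q' => if q' ∈ F then M q q' else 0

/-- The probability of staying inside `F` during the first `n` steps while reading `w`,
starting from `q₀`. -/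
noncomputable def safeSeq {Q : Type*} [Fintype Q] [DecidableEq Q] {S : Type*}
    (M : S → Matrix Q Q ℝ) (F : Finset Q) (q₀ : Q) (w : ℕ → S) (n : ℕ) : ℝ :=
  ∑ q, ((List.range n).foldl (fun v i => Matrix.vecMul v (subMat (M (w i)) F))
    (Pi.single q₀ 1)) q

/-- The safety value of the infinite word `w`: the probability of staying in `F` forever,
namely the infimum of the nonincreasing sequence `safeSeq`. -/
noncomputable def safeVal {Q : Type*} [Fintype Q] [DecidableEq Q] {S : Type*}
    (M : S → Matrix Q Q ℝ) (F : Finset Q) (q₀ : Q) (w : ℕ → S) : ℝ :=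
  ⨅ n : ℕ, safeSeq M F q₀ w n

lemma subMat_nonneg {Q : Type*} [DecidableEq Q] {A : Matrix Q Q ℝ} (hA : ∀ q q', 0 ≤ A q q')
    (F : Finset Q) (q q' : Q) : 0 ≤ subMat A F q q' := by
  simp only [subMat, of_apply]
  split_ifs
  exacts [hA q q', le_rfl]

section Safety

variable {Q : Type*} [Fintype Q] [DecidableEq Q] {S : Type*}
  (M : S → Matrix Q Q ℝ) (F : Finset Q) (q₀ : Q)

noncomputable def stateVec (w : ℕ → S) (n : ℕ) : Q → ℝ :=
  (List.range n).foldl (fun v i => vecMul v (subMat (M (w i)) F)) (Pi.single q₀ 1)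

lemma safeSeq_eq_sum_stateVec (w : ℕ → S) (n : ℕ) :
    safeSeq M F q₀ w n = ∑ q, stateVec M F q₀ w n q := rfl

lemma stateVec_zero (w : ℕ → S) : stateVec M F q₀ w 0 = Pi.single q₀ 1 := rfl

lemma stateVec_succ (w : ℕ → S) (n : ℕ) :
    stateVec M F q₀ w (n + 1) = vecMul (stateVec M F q₀ w n) (subMat (M (w n)) F) := by
  simp [stateVec, List.range_succ]

lemma safeSeq_zero (w : ℕ → S) : safeSeq M F q₀ w 0 = 1 := by
  simp [safeSeq_eq_sum_stateVec, stateVec_zero]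

variable {M}

lemma stateVec_nonneg (hnn : ∀ σ q q', 0 ≤ M σ q q') (w : ℕ → S) (n : ℕ) (q : Q) :
    0 ≤ stateVec M F q₀ w n q := by
  induction n generalizing q with
  | zero => by_cases h : q = q₀ <;> simp [stateVec_zero, h]
  | succ n ih =>
    rw [stateVec_succ]
    exact Finset.sum_nonneg fun q' _ => mul_nonneg (ih q') (subMat_nonneg (hnn _) F q' q)

lemma safeSeq_nonneg (hnn : ∀ σ q q', 0 ≤ M σ q q') (w : ℕ → S) (n : ℕ) :
    0 ≤ safeSeq M F q₀ w n :=
  Finset.sum_nonneg fun q _ => stateVec_nonneg F q₀ hnn w n q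

lemma bddBelow_range_safeSeq (hnn : ∀ σ q q', 0 ≤ M σ q q') (w : ℕ → S) :
    BddBelow (Set.range (safeSeq M F q₀ w)) :=
  ⟨0, Set.forall_mem_range.2 (safeSeq_nonneg F q₀ hnn w)⟩

lemma safeVal_le_one (hnn : ∀ σ q q', 0 ≤ M σ q q') (w : ℕ → S) : safeVal M F q₀ w ≤ 1 :=
  safeSeq_zero M F q₀ w ▸ ciInf_le (bddBelow_range_safeSeq F q₀ hnn w) 0

variable [TopologicalSpace S] [DiscreteTopology S]

lemma continuous_stateVec (n : ℕ) : Continuous fun w : ℕ → S => stateVec M F q₀ w n := by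
  induction n with
  | zero => exact continuous_const
  | succ n ih =>
    simp_rw [stateVec_succ]
    exact ih.matrix_vecMul
      ((continuous_of_discreteTopology (f := fun σ => subMat (M σ) F)).comp (continuous_apply n))

lemma continuous_safeSeq (n : ℕ) : Continuous fun w : ℕ → S => safeSeq M F q₀ w n :=
  continuous_finsetSum _ fun q _ => (continuous_apply q).comp (continuous_stateVec F q₀ n)

lemma upperSemicontinuous_safeVal (hnn : ∀ σ q q', 0 ≤ M σ q q') :
    UpperSemicontinuous (safeVal M F q₀) :=
  upperSemicontinuous_ciInf (bddBelow_range_safeSeq F q₀ hnn)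
    fun n => (continuous_safeSeq F q₀ n).upperSemicontinuous

end Safety

theorem stmt7_general {Q : Type*} [Fintype Q] [DecidableEq Q]
    {S : Type*} [Fintype S] [Nonempty S]
    (M : S → Matrix Q Q ℝ)
    (hnn : ∀ σ q q', 0 ≤ M σ q q')
    (F : Finset Q) (q₀ : Q)
    (hlimit : ∀ ε : ℝ, 0 < ε → ∃ w : ℕ → S, 1 - ε < safeVal M F q₀ w) :
    ∃ w : ℕ → S, safeVal M F q₀ w = 1 := by
  let : TopologicalSpace S := ⊥
  have : DiscreteTopology S := ⟨rfl⟩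
  obtain ⟨w, -, hmax⟩ := ((upperSemicontinuous_safeVal F q₀ hnn).upperSemicontinuousOn
    Set.univ).exists_isMaxOn Set.univ_nonempty isCompact_univ
  refine ⟨w, le_antisymm (safeVal_le_one F q₀ hnn w) (le_of_forall_pos_lt_add fun ε hε => ?_)⟩
  obtain ⟨v, hv⟩ := hlimit ε hε
  have hvw : safeVal M F q₀ v ≤ safeVal M F q₀ w := hmax (Set.mem_univ v)
  linarith

theorem stmt7 {Q : Type*} [Fintype Q] [DecidableEq Q] [Nonempty Q]
    {S : Type*} [Fintype S] [Nonempty S]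
    (M : S → Matrix Q Q ℝ)
    (hnn : ∀ σ q q', 0 ≤ M σ q q') (hrow : ∀ σ q, ∑ q', M σ q q' = 1)
    (F : Finset Q) (q₀ : Q) (hq₀ : q₀ ∈ F)
    (hlimit : ∀ ε : ℝ, 0 < ε → ∃ w : ℕ → S, 1 - ε < safeVal M F q₀ w) :
    ∃ w : ℕ → S, safeVal M F q₀ w = 1 :=
  stmt7_general M hnn F q₀ hlimit
end

section
/- Let 0 < x < 1 be a real number. Over the three-letter alphabet {a, b, $}, define two families of 4×4 row-stochastic matrices (rows/columns indexed 0,1,2,3). First family: A_a has row 0 = (x, 1-x, 0, 0), row 1 = (0,1,0,0), rows 2,3 = identity rows; A_b has row 0 = (0,0,1,0), row 1 = (1,0,0,0), rows 2,3 = identity rows; A_$ has rows 0 and 1 equal to (0,0,0,1) and rows 2,3 = identity rows. Second family: B_a has row 0 = (1-x, x, 0, 0), row 1 = (0,1,0,0), rows 2,3 = identity rows; B_b has row 0 = (0,0,1,0), row 1 = (1,0,0,0), rows 2,3 = identity rows; B_$ has rows 0 and 1 equal to (0,0,0,1) and rows 2,3 = identity rows. For an infinite word w : ℕ → {a,b,$},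 let V₁(w) = sup_n (e₀ · A_{w₀} ⋯ A_{w_{n-1}})_2 (the probability of reaching the absorbing state 2 in the first automaton) and V₂(w) = sup_n (e₀ · B_{w₀} ⋯ B_{w_{n-1}})_3 (the probability of reaching the absorbing state 3 in the second automaton); both sequences are nondecreasing. Then the following are equivalent: (i) for every ε > 0 there exists an infinite word w with (1/2)·V₁(w) + (1/2)·V₂(w) > 1 - ε; (ii) x > 1/2. -/
/-!
`Bmat x` is `Amat (1 - x)`, observed at state `3` instead of state `2`.

If `x ≤ 1/2`, then at every time the first automaton has at least as much mass as the second
on state `1`, on the states `{0, 1}` and on state `3`; hence its mass on `2` plus the second one's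
mass on `3` is at most `1`, and so is `V₁ + V₂`.

If `x > 1/2`, on the word `(aᵏ b)^(2ᵏ) $` the first automaton reaches `2` with probability
`1 - (1 - xᵏ)^(2ᵏ) ≥ 1 - exp (-(2x)ᵏ)` and the second reaches `3` with probability
`(1 - (1 - x)ᵏ)^(2ᵏ) ≥ 1 - (2(1 - x))ᵏ` (Bernoulli); both bounds tend to `1` as `k → ∞`.
-/

open Matrix

/-- The transition matrices of the first automaton `A₁` over the alphabet
`{a, b, $}` (encoded as `0, 1, 2 : Fin 3`); its accepting absorbing state is `2`. -/
noncomputable def Amat (x : ℝ) : Fin 3 → Matrix (Fin 4) (Fin 4) ℝ :=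
  ![!![x, 1 - x, 0, 0; 0, 1, 0, 0; 0, 0, 1, 0; 0, 0, 0, 1],
    !![0, 0, 1, 0; 1, 0, 0, 0; 0, 0, 1, 0; 0, 0, 0, 1],
    !![0, 0, 0, 1; 0, 0, 0, 1; 0, 0, 1, 0; 0, 0, 0, 1]]

/-- The transition matrices of the second automaton `A₂` over the alphabet
`{a, b, $}`; its accepting absorbing state is `3`. -/
noncomputable def Bmat (x : ℝ) : Fin 3 → Matrix (Fin 4) (Fin 4) ℝ :=
  ![!![1 - x, x, 0, 0; 0, 1, 0, 0; 0, 0, 1, 0; 0, 0, 0, 1],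
    !![0, 0, 1, 0; 1, 0, 0, 0; 0, 0, 1, 0; 0, 0, 0, 1],
    !![0, 0, 0, 1; 0, 0, 0, 1; 0, 0, 1, 0; 0, 0, 0, 1]]

/-- The probability of being in state `q` after reading the first `n` letters of `w`. -/
noncomputable def distAt (M : Fin 3 → Matrix (Fin 4) (Fin 4) ℝ) (w : ℕ → Fin 3)
    (n : ℕ) (q : Fin 4) : ℝ :=
  ((List.range n).foldl (fun v i => Matrix.vecMul v (M (w i))) ![(1 : ℝ), 0, 0, 0]) q

/-- The probability of ever reaching the absorbing state `2` in the first automaton. -/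
noncomputable def V₁ (x : ℝ) (w : ℕ → Fin 3) : ℝ :=
  ⨆ n : ℕ, distAt (Amat x) w n 2

/-- The probability of ever reaching the absorbing state `3` in the second automaton. -/
noncomputable def V₂ (x : ℝ) (w : ℕ → Fin 3) : ℝ :=
  ⨆ n : ℕ, distAt (Bmat x) w n 3

section Stochastic

variable (M : Fin 3 → Matrix (Fin 4) (Fin 4) ℝ) (w : ℕ → Fin 3)

lemma distAt_succ (n : ℕ) : distAt M w (n + 1) = distAt M w n ᵥ* M (w n) := by
  funext q
  simp only [distAt, List.range_succ, List.foldl_append, List.foldl_cons, List.foldl_nil]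
  rfl

variable {M}

lemma distAt_mem_stdSimplex (hM : ∀ c, M c ∈ rowStochastic ℝ (Fin 4)) (n : ℕ) :
    distAt M w n ∈ stdSimplex ℝ (Fin 4) := by
  induction n with
  | zero =>
    exact ⟨fun q => by fin_cases q <;> simp [distAt], by simp [distAt, Fin.sum_univ_four]⟩
  | succ n ih =>
    rw [distAt_succ]
    refine ⟨nonneg_vecMul_of_mem_rowStochastic (hM _) ih.1, ?_⟩
    have := vecMul_dotProduct_one_eq_one_rowStochastic (hM (w n))
      (by simpa [dotProduct] using ih.2)
    simpa [dotProduct] using this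

lemma distAt_le_one (hM : ∀ c, M c ∈ rowStochastic ℝ (Fin 4)) (n : ℕ) (q : Fin 4) :
    distAt M w n q ≤ 1 := by
  obtain ⟨hnonneg, hsum⟩ := distAt_mem_stdSimplex w hM n
  exact hsum ▸ Finset.single_le_sum (fun i _ => hnonneg i) (Finset.mem_univ q)

lemma le_iSup_distAt (hM : ∀ c, M c ∈ rowStochastic ℝ (Fin 4)) (n : ℕ) (q : Fin 4) :
    distAt M w n q ≤ ⨆ m, distAt M w m q :=
  le_ciSup ⟨1, Set.forall_mem_range.2 fun m => distAt_le_one w hM m q⟩ n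

lemma monotone_distAt_of_absorbing (hM : ∀ c, M c ∈ rowStochastic ℝ (Fin 4)) {q : Fin 4}
    (hq : ∀ c, M c q q = 1) : Monotone fun n => distAt M w n q := by
  refine monotone_nat_of_le_succ fun n => ?_
  have hnonneg := (distAt_mem_stdSimplex w hM n).1
  calc distAt M w n q = distAt M w n q * M (w n) q q := by rw [hq, mul_one]
    _ ≤ ∑ i, distAt M w n i * M (w n) i q :=
      Finset.single_le_sum (fun i _ => mul_nonneg (hnonneg i) ((hM (w n)).1 i q))
        (Finset.mem_univ q)
    _ = distAt M w (n + 1) q := by rw [distAt_succ]; rfl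

end Stochastic

lemma ciSup_add_ciSup_le_of_monotone {ι : Type*} [Preorder ι] [IsDirectedOrder ι] [Nonempty ι]
    {f g : ι → ℝ} (hf : Monotone f) (hg : Monotone g) {c : ℝ} (h : ∀ i, f i + g i ≤ c) :
    (⨆ i, f i) + ⨆ i, g i ≤ c := by
  have hfg (i j : ι) : f i + g j ≤ c := by
    obtain ⟨k, hik, hjk⟩ := directed_of (· ≤ ·) i j
    linarith [hf hik, hg hjk, h k]
  have hg_le (j : ι) : g j ≤ c - ⨆ i, f i := by
    have : (⨆ i, f i) ≤ c - g j := ciSup_le fun i => by linarith [hfg i j]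
    linarith
  linarith [ciSup_le hg_le]

section Automaton

variable (x : ℝ)

lemma Bmat_eq_Amat_one_sub : Bmat x = Amat (1 - x) := by
  funext c
  fin_cases c <;> simp [Amat, Bmat]

lemma Amat_mem_rowStochastic {x : ℝ} (hx0 : 0 ≤ x) (hx1 : x ≤ 1) (c : Fin 3) :
    Amat x c ∈ rowStochastic ℝ (Fin 4) := by
  rw [mem_rowStochastic_iff_sum]
  refine ⟨fun i j => ?_, fun i => ?_⟩ <;> fin_cases c <;> fin_cases i <;>
    (try fin_cases j) <;> simp [Amat, Fin.sum_univ_four] <;> linarith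

lemma Amat_absorbing_two (c : Fin 3) : Amat x c 2 2 = 1 := by
  fin_cases c <;> simp [Amat]

lemma Amat_absorbing_three (c : Fin 3) : Amat x c 3 3 = 1 := by
  fin_cases c <;> simp [Amat]

variable (v : Fin 4 → ℝ)

lemma vecMul_Amat_zero : v ᵥ* Amat x 0 = ![v 0 * x, v 0 * (1 - x) + v 1, v 2, v 3] := by
  funext i
  fin_cases i <;> simp [Amat, vecMul, dotProduct, Fin.sum_univ_four]

lemma vecMul_Amat_one : v ᵥ* Amat x 1 = ![v 1, 0, v 0 + v 2, v 3] := by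
  funext i
  fin_cases i <;> simp [Amat, vecMul, dotProduct, Fin.sum_univ_four]

lemma vecMul_Amat_two : v ᵥ* Amat x 2 = ![0, 0, v 2, v 0 + v 1 + v 3] := by
  funext i
  fin_cases i <;> simp [Amat, vecMul, dotProduct, Fin.sum_univ_four]

end Automaton

def Dominates (p q : Fin 4 → ℝ) : Prop :=
  q 1 ≤ p 1 ∧ q 0 + q 1 ≤ p 0 + p 1 ∧ q 3 ≤ p 3

lemma Dominates.vecMul_Amat {x : ℝ} (hx0 : 0 ≤ x) (hx : x ≤ 1 / 2) {p q : Fin 4 → ℝ}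
    (hp : 0 ≤ p 0) (h : Dominates p q) (c : Fin 3) :
    Dominates (p ᵥ* Amat x c) (q ᵥ* Amat (1 - x) c) := by
  obtain ⟨h1, h01, h3⟩ := h
  -- on the letter `a`, `p` moves the fraction `1 - x ≥ x` of its state-`0` mass to state `1`
  have h1a : q 0 * x + q 1 ≤ p 0 * (1 - x) + p 1 := by nlinarith
  fin_cases c <;>
    simp [Dominates, vecMul_Amat_zero, vecMul_Amat_one, vecMul_Amat_two] <;> grind

lemma dominates_distAt {x : ℝ} (hx0 : 0 ≤ x) (hx : x ≤ 1 / 2) (w : ℕ → Fin 3) (n : ℕ) :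
    Dominates (distAt (Amat x) w n) (distAt (Bmat x) w n) := by
  induction n with
  | zero => simp [Dominates, distAt]
  | succ n ih =>
    have hp : 0 ≤ distAt (Amat x) w n 0 :=
      (distAt_mem_stdSimplex w (Amat_mem_rowStochastic hx0 (by linarith)) n).1 0
    rw [distAt_succ, distAt_succ, Bmat_eq_Amat_one_sub]
    exact (Bmat_eq_Amat_one_sub x ▸ ih).vecMul_Amat hx0 hx hp (w n)

lemma V₁_add_V₂_le_one {x : ℝ} (hx0 : 0 ≤ x) (hx : x ≤ 1 / 2) (w : ℕ → Fin 3) :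
    V₁ x w + V₂ x w ≤ 1 := by
  have hA := Amat_mem_rowStochastic hx0 (by linarith)
  have hB : ∀ c, Bmat x c ∈ rowStochastic ℝ (Fin 4) := by
    rw [Bmat_eq_Amat_one_sub]; exact Amat_mem_rowStochastic (by linarith) (by linarith)
  refine ciSup_add_ciSup_le_of_monotone
    (monotone_distAt_of_absorbing w hA (Amat_absorbing_two x))
    (monotone_distAt_of_absorbing w hB
      (by simpa [Bmat_eq_Amat_one_sub] using Amat_absorbing_three (1 - x)))
    fun n => ?_
  obtain ⟨-, -, h3⟩ := dominates_distAt hx0 hx w n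
  obtain ⟨hnonneg, hsum⟩ := distAt_mem_stdSimplex w hA n
  rw [Fin.sum_univ_four] at hsum
  linarith [hnonneg 0, hnonneg 1]

section Words

variable (M : Fin 3 → Matrix (Fin 4) (Fin 4) ℝ)

def runWord (l : List (Fin 3)) (v : Fin 4 → ℝ) : Fin 4 → ℝ :=
  l.foldl (fun v c => v ᵥ* M c) v

lemma runWord_append (l₁ l₂ : List (Fin 3)) (v : Fin 4 → ℝ) :
    runWord M (l₁ ++ l₂) v = runWord M l₂ (runWord M l₁ v) :=
  List.foldl_append

lemma distAt_length_getD (l : List (Fin 3)) (d : Fin 3) :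
    distAt M (fun i => l.getD i d) l.length = runWord M l ![1, 0, 0, 0] := by
  have hl : (List.range l.length).map (fun i => l.getD i d) = l :=
    List.ext_getElem (by simp) fun i _ hi => by simp [List.getD_eq_getElem?_getD, hi]
  funext q
  rw [distAt, runWord]
  conv_rhs => rw [← hl, List.foldl_map]

end Words

section TestWord

variable (x : ℝ)

lemma runWord_Amat_replicate_zero (k : ℕ) (u v r s : ℝ) :
    runWord (Amat x) (List.replicate k 0) ![u, v, r, s] =
      ![u * x ^ k, u * (1 - x ^ k) + v, r, s] := by
  induction k generalizing u v with
  | zero => simp [runWord]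
  | succ k ih =>
    rw [List.replicate_succ, ← List.singleton_append, runWord_append]
    have h0 : runWord (Amat x) [0] ![u, v, r, s] = ![u * x, u * (1 - x) + v, r, s] := by
      simp [runWord, vecMul_Amat_zero]
    rw [h0, ih]
    funext i; fin_cases i <;> simp <;> ring

lemma runWord_Amat_block (k : ℕ) (u r s : ℝ) :
    runWord (Amat x) (List.replicate k 0 ++ [1]) ![u, 0, r, s] =
      ![u * (1 - x ^ k), 0, u * x ^ k + r, s] := by
  rw [runWord_append, runWord_Amat_replicate_zero]
  simp only [runWord, List.foldl_cons, List.foldl_nil, vecMul_Amat_one]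
  funext i; fin_cases i <;> simp

lemma runWord_Amat_blocks (k j : ℕ) (u r s : ℝ) :
    runWord (Amat x) (List.replicate j (List.replicate k 0 ++ [1])).flatten ![u, 0, r, s] =
      ![u * (1 - x ^ k) ^ j, 0, u * (1 - (1 - x ^ k) ^ j) + r, s] := by
  induction j generalizing u r with
  | zero => simp [runWord]
  | succ j ih =>
    rw [List.replicate_succ, List.flatten_cons, runWord_append, runWord_Amat_block, ih]
    funext i; fin_cases i <;> simp <;> ring

/-- The word `(aᵏ b)ʲ $`. -/
def testWord (k j : ℕ) : List (Fin 3) :=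
  (List.replicate j (List.replicate k 0 ++ [1])).flatten ++ [2]

lemma runWord_Amat_testWord (k j : ℕ) :
    runWord (Amat x) (testWord k j) ![1, 0, 0, 0] =
      ![0, 0, 1 - (1 - x ^ k) ^ j, (1 - x ^ k) ^ j] := by
  rw [testWord, runWord_append, runWord_Amat_blocks]
  simp only [runWord, List.foldl_cons, List.foldl_nil, vecMul_Amat_two]
  funext i; fin_cases i <;> simp

def testSeq (k j : ℕ) : ℕ → Fin 3 :=
  fun i => (testWord k j).getD i 2

end TestWord

lemma V₁_add_V₂_testSeq_ge {x : ℝ} (hx0 : 0 ≤ x) (hx1 : x ≤ 1) (k j : ℕ) :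
    1 - (1 - x ^ k) ^ j + (1 - (1 - x) ^ k) ^ j ≤
      V₁ x (testSeq k j) + V₂ x (testSeq k j) := by
  have h₁ := le_iSup_distAt (testSeq k j) (Amat_mem_rowStochastic hx0 hx1) (testWord k j).length 2
  have h₂ := le_iSup_distAt (testSeq k j)
    (Amat_mem_rowStochastic (x := 1 - x) (by linarith) (by linarith)) (testWord k j).length 3
  have hrun (M : Fin 3 → Matrix (Fin 4) (Fin 4) ℝ) :
      distAt M (testSeq k j) (testWord k j).length = runWord M (testWord k j) ![1, 0, 0, 0] :=
    distAt_length_getD M _ 2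
  simp only [hrun, runWord_Amat_testWord, Fin.isValue, cons_val] at h₁ h₂
  rw [V₁, V₂, Bmat_eq_Amat_one_sub]
  linarith

lemma one_sub_pow_pow_two_pow_le_exp {x : ℝ} (hx0 : 0 ≤ x) (hx1 : x ≤ 1) (k : ℕ) :
    (1 - x ^ k) ^ 2 ^ k ≤ Real.exp (-(2 * x) ^ k) := by
  have h := Real.one_sub_div_pow_le_exp_neg (n := 2 ^ k) (t := (2 * x) ^ k)
    (by push_cast; exact pow_le_pow_left₀ (by positivity) (by linarith) k)
  rwa [Nat.cast_pow, Nat.cast_ofNat, mul_pow, mul_div_cancel_left₀ _ (by positivity),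
    ← mul_pow] at h

lemma one_sub_le_one_sub_pow_pow_two_pow {y : ℝ} (hy0 : 0 ≤ y) (hy1 : y ≤ 1) (k : ℕ) :
    1 - (2 * y) ^ k ≤ (1 - y ^ k) ^ 2 ^ k := by
  have h := one_add_mul_le_pow (a := -y ^ k)
    (by linarith [pow_le_one₀ hy0 hy1 (n := k)]) (2 ^ k)
  rw [mul_pow]
  simpa only [Nat.cast_pow, Nat.cast_ofNat, mul_neg, ← sub_eq_add_neg] using h

lemma exists_two_sub_lt_V₁_add_V₂ {x : ℝ} (hx : 1 / 2 < x) (hx1 : x < 1) {δ : ℝ}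
    (hδ : 0 < δ) :
    ∃ w, 2 - δ < V₁ x w + V₂ x w := by
  have hlim : Filter.Tendsto (fun k : ℕ => Real.exp (-(2 * x) ^ k) + (2 * (1 - x)) ^ k)
      Filter.atTop (nhds 0) := by
    simpa using (Real.tendsto_exp_neg_atTop_nhds_zero.comp
      (tendsto_pow_atTop_atTop_of_one_lt (by linarith : 1 < 2 * x))).add
      (tendsto_pow_atTop_nhds_zero_of_lt_one (by linarith : 0 ≤ 2 * (1 - x)) (by linarith))
  obtain ⟨k, hk⟩ := (hlim.eventually (gt_mem_nhds hδ)).exists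
  refine ⟨testSeq k (2 ^ k), ?_⟩
  have := V₁_add_V₂_testSeq_ge (by linarith) hx1.le k (2 ^ k)
  have := one_sub_pow_pow_two_pow_le_exp (by linarith) hx1.le k
  have := one_sub_le_one_sub_pow_pow_two_pow (y := 1 - x) (by linarith) (by linarith) k
  linarith

theorem stmt10 (x : ℝ) (hx0 : 0 < x) (hx1 : x < 1) :
    (∀ ε : ℝ, 0 < ε → ∃ w : ℕ → Fin 3,
        1 - ε < (1 / 2) * V₁ x w + (1 / 2) * V₂ x w) ↔ 1 / 2 < x := by
  constructor
  · intro h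
    by_contra! hx
    obtain ⟨w, hw⟩ := h (1 / 2) (by norm_num)
    linarith [V₁_add_V₂_le_one hx0.le hx w]
  · intro hx ε hε
    obtain ⟨w, hw⟩ := exists_two_sub_lt_V₁_add_V₂ hx hx1 (mul_pos two_pos hε)
    exact ⟨w, by linarith⟩
end

section
/- For every real number x with 1/2 < x < 1 and every ε > 0, there exists a sequence n : ℕ → ℕ such that the family (x^{n_k})_{k∈ℕ} is not summable, while the family ((1-x)^{n_k})_{k∈ℕ} is summable and ∑_{k=0}^∞ (1-x)^{n_k} ≤ ε. -/
/-!
Put `y = 1 - x`, so `0 < y < x < 1`. Choose `n_k` with `x ^ n_k` comparable to `1 / (k + 1)`: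
then `∑ x ^ n_k` diverges like the harmonic series, while `y ^ n_k = (x ^ n_k) ^ r` with
`r = log_x y > 1` is dominated by a convergent `p`-series. Shifting every exponent by a large `N`
multiplies the `y`-series by `y ^ N`, which makes its sum at most `ε` and keeps the `x`-series
divergent.
-/

open Real Filter

lemma pow_eq_rpow_logb_pow {b y : ℝ} (hb : 0 < b) (hb1 : b ≠ 1) (hy : 0 < y) (n : ℕ) :
    y ^ n = (b ^ n) ^ logb b y := by
  rw [← rpow_pow_comm hb.le, rpow_logb hb hb1 hy]

lemma one_lt_logb_of_lt_of_lt_one {b y : ℝ} (hy : 0 < y) (hyb : y < b) (hb : b < 1) :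
    1 < logb b y :=
  (one_lt_div_of_neg (log_neg (hy.trans hyb) hb)).2 (log_lt_log hy hyb)

lemma exists_inv_succ_le_pow_le {x : ℝ} (hx0 : 0 < x) (hx1 : x < 1) :
    ∃ m : ℕ → ℕ, ∀ k : ℕ, ((k : ℝ) + 1)⁻¹ ≤ x ^ m k ∧ x ^ m k ≤ x⁻¹ * ((k : ℝ) + 1)⁻¹ := by
  choose m hm using fun k : ℕ => exists_nat_pow_near_of_lt_one (x := ((k : ℝ) + 1)⁻¹)
    (by positivity) (inv_le_one_of_one_le₀ (by simp)) hx0 hx1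
  refine ⟨m, fun k => ⟨(hm k).2, ?_⟩⟩
  rw [le_inv_mul_iff₀ hx0, ← pow_succ']
  exact (hm k).1.le

lemma not_summable_of_inv_succ_le {a : ℕ → ℝ} (h : ∀ k : ℕ, ((k : ℝ) + 1)⁻¹ ≤ a k) :
    ¬ Summable a := by
  intro ha
  have hsucc : Summable fun k : ℕ => ((k + 1 : ℕ) : ℝ)⁻¹ := by
    push_cast
    exact ha.of_nonneg_of_le (fun k => by positivity) h
  exact Real.not_summable_natCast_inv ((summable_nat_add_iff 1).1 hsucc)

lemma summable_rpow_of_le_mul_inv_succ {a : ℕ → ℝ} {C r : ℝ} (ha : ∀ k, 0 ≤ a k)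
    (hC : ∀ k : ℕ, a k ≤ C * ((k : ℝ) + 1)⁻¹) (hr : 1 < r) : Summable fun k => a k ^ r := by
  have hC0 : 0 ≤ C := by simpa using (ha 0).trans (hC 0)
  refine (((summable_one_div_nat_add_rpow 1 r).2 hr).mul_left (C ^ r)).of_nonneg_of_le
    (fun k => rpow_nonneg (ha k) r) fun k => ?_
  have hk : (0 : ℝ) < k + 1 := by positivity
  calc a k ^ r ≤ (C * ((k : ℝ) + 1)⁻¹) ^ r := rpow_le_rpow (ha k) (hC k) (by linarith)
    _ = C ^ r * (1 / |(k : ℝ) + 1| ^ r) := by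
      rw [mul_rpow hC0 (inv_nonneg.2 hk.le), inv_rpow hk.le, abs_of_pos hk, one_div]

lemma exists_not_summable_pow_summable_pow {x y : ℝ} (hy : 0 < y) (hyx : y < x) (hx : x < 1) :
    ∃ m : ℕ → ℕ, ¬ Summable (fun k => x ^ m k) ∧ Summable (fun k => y ^ m k) := by
  have hx0 : 0 < x := hy.trans hyx
  obtain ⟨m, hm⟩ := exists_inv_succ_le_pow_le hx0 hx
  refine ⟨m, not_summable_of_inv_succ_le fun k => (hm k).1, ?_⟩
  simp_rw [pow_eq_rpow_logb_pow hx0 hx.ne hy]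
  exact summable_rpow_of_le_mul_inv_succ (fun k => by positivity) (fun k => (hm k).2)
    (one_lt_logb_of_lt_of_lt_one hy hyx hx)

lemma summable_pow_add_iff {x : ℝ} (hx : x ≠ 0) (N : ℕ) (m : ℕ → ℕ) :
    Summable (fun k => x ^ (N + m k)) ↔ Summable (fun k => x ^ m k) := by
  simp_rw [pow_add]
  exact summable_mul_left_iff (pow_ne_zero N hx)

lemma tsum_pow_add (x : ℝ) (N : ℕ) (m : ℕ → ℕ) :
    ∑' k, x ^ (N + m k) = x ^ N * ∑' k, x ^ m k := by
  simp_rw [pow_add]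
  exact tsum_mul_left

lemma exists_tsum_pow_add_le {y ε : ℝ} (hy0 : 0 ≤ y) (hy1 : y < 1) (hε : 0 < ε) (m : ℕ → ℕ) :
    ∃ N : ℕ, ∑' k, y ^ (N + m k) ≤ ε := by
  simp_rw [tsum_pow_add]
  have h := (tendsto_pow_atTop_nhds_zero_of_lt_one hy0 hy1).mul_const (∑' k, y ^ m k)
  rw [zero_mul] at h
  exact (h.eventually (ge_mem_nhds hε)).exists

theorem stmt14 (x : ℝ) (hx0 : 1 / 2 < x) (hx1 : x < 1) (ε : ℝ) (hε : 0 < ε) :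
    ∃ n : ℕ → ℕ,
      ¬ Summable (fun k : ℕ => x ^ n k) ∧
        Summable (fun k : ℕ => (1 - x) ^ n k) ∧
          ∑' k : ℕ, (1 - x) ^ n k ≤ ε := by
  have hy : 0 < 1 - x := by linarith
  obtain ⟨m, hdiv, hconv⟩ := exists_not_summable_pow_summable_pow hy (by linarith) hx1
  obtain ⟨N, hN⟩ := exists_tsum_pow_add_le hy.le (by linarith) hε m
  exact ⟨fun k => N + m k, (summable_pow_add_iff (by linarith) N m).not.2 hdiv,
    (summable_pow_add_iff hy.ne' N m).2 hconv, hN⟩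
end

section
/- For every real number x with 1/2 < x < 1 and every ε > 0, there exist m ∈ ℕ and n : Fin m → ℕ such that ∏_{j<m} (1 - x^{n_j}) ≤ ε and ∑_{j<m} (1-x)^{n_j} ≤ 2ε. -/
/-! Take all `n j` equal to one `n`. Since `1 - y ≤ exp (-y)`, the product `(1 - x ^ n) ^ m` is at
most `ε` as soon as `m * x ^ n ≥ |log ε|`, which the choice `m = ⌈|log ε| / x ^ n⌉₊` achieves with
`m * x ^ n ≤ |log ε| + 1`. The sum is then `m * (1 - x) ^ n = m * x ^ n * r ^ n ≤ (|log ε| + 1) * r ^ n`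
with `r = (1 - x) / x < 1`, which is small for large `n`. -/

open Real

lemma one_sub_pow_le_exp_neg_mul {y : ℝ} (hy : y ≤ 1) (m : ℕ) :
    (1 - y) ^ m ≤ exp (-(m * y)) :=
  calc (1 - y) ^ m ≤ exp (-y) ^ m := pow_le_pow_left₀ (sub_nonneg.2 hy) (one_sub_le_exp_neg y) m
    _ = exp (-(m * y)) := by rw [← exp_nat_mul, mul_neg]

lemma exists_nat_le_mul_le_add {y : ℝ} (hy : 0 < y) {L : ℝ} (hL : 0 ≤ L) :
    ∃ m : ℕ, L ≤ m * y ∧ m * y ≤ L + y := by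
  refine ⟨⌈L / y⌉₊, (div_le_iff₀ hy).1 (Nat.le_ceil _), ?_⟩
  have := Nat.ceil_lt_add_one (div_nonneg hL hy.le)
  calc (⌈L / y⌉₊ : ℝ) * y ≤ (L / y + 1) * y := by gcongr
    _ = L + y := by field_simp

theorem exists_one_sub_pow_pow_le_and_mul_pow_le {x c ε : ℝ} (hx0 : 0 < x) (hx1 : x ≤ 1)
    (hc0 : 0 ≤ c) (hcx : c < x) (hε : 0 < ε) :
    ∃ m n : ℕ, (1 - x ^ n) ^ m ≤ ε ∧ m * c ^ n ≤ ε := by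
  set L := |log ε|
  set r := c / x
  have hr1 : r < 1 := (div_lt_one hx0).2 hcx
  obtain ⟨n, hn⟩ := exists_pow_lt_of_lt_one (div_pos hε (by positivity : 0 < L + 1)) hr1
  have hxn : 0 < x ^ n := pow_pos hx0 n
  have hxn1 : x ^ n ≤ 1 := pow_le_one₀ hx0.le hx1
  obtain ⟨m, hLm, hmL⟩ := exists_nat_le_mul_le_add hxn (abs_nonneg (log ε))
  refine ⟨m, n, ?_, ?_⟩
  · calc (1 - x ^ n) ^ m ≤ exp (-(m * x ^ n)) := one_sub_pow_le_exp_neg_mul hxn1 m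
      _ ≤ exp (log ε) := exp_le_exp.2 (by linarith [neg_abs_le (log ε)])
      _ = ε := exp_log hε
  · have hrn : 0 ≤ r ^ n := pow_nonneg (div_nonneg hc0 hx0.le) n
    calc (m : ℝ) * c ^ n = m * x ^ n * r ^ n := by rw [div_pow]; field_simp
      _ ≤ (L + 1) * r ^ n := by gcongr; linarith
      _ ≤ ε := ((lt_div_iff₀' (by positivity)).1 hn).le

theorem stmt15 (x : ℝ) (hx0 : 1 / 2 < x) (hx1 : x < 1) (ε : ℝ) (hε : 0 < ε) :
    ∃ (m : ℕ) (n : Fin m → ℕ),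
      ∏ j : Fin m, (1 - x ^ n j) ≤ ε ∧ ∑ j : Fin m, (1 - x) ^ n j ≤ 2 * ε := by
  obtain ⟨m, n, hprod, hsum⟩ := exists_one_sub_pow_pow_le_and_mul_pow_le (c := 1 - x)
    (by linarith) hx1.le (by linarith) (by linarith) hε
  refine ⟨m, fun _ => n, by simpa using hprod, ?_⟩
  simp only [Finset.sum_const, Finset.card_univ, Fintype.card_fin, nsmul_eq_mul]
  linarith
end

section
/- Let 0 < x < 1 be a real number. Then the following are equivalent: (i) for every ε > 0 there exist m ∈ ℕ and n : Fin m → ℕ such that ∏_{j<m} (1 - x^{n_j}) ≤ ε and 1 - ∏_{j<m} (1 - (1-x)^{n_j}) ≤ ε; (ii) x > 1/2. (This is the numerical core of the lemma stating that the limit problem for the combined acceptance-absorbing reachability automaton has answer yes iff x > 1/2: the first quantity is the rejection probability of the first component automaton and the second is the rejection probability of the second component automaton on the word a^{n_0} b a^{n_1} b … a^{n_{m-1}} b $^ω.) -/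
/-!
If `x ≤ 1/2` then `x ≤ 1 - x`, so `∏ (1 - (1 - x) ^ n j) ≤ ∏ (1 - x ^ n j)` and the two
quantities add up to at least `1`; they cannot both be small.

If `x > 1/2`, take `m` copies of the same exponent `k`. Then `(1 - x ^ k) ^ m ≤ exp (-m x ^ k)` and,
by Bernoulli, `1 - (1 - (1 - x) ^ k) ^ m ≤ m (1 - x) ^ k`. With `m ≈ 1 / (ε x ^ k)` the first is at
most `ε`, and the second is about `((1 - x) / x) ^ k / ε`, which tends to `0` as `k → ∞`.
-/

open Finset Filter Topology

theorem prod_one_sub_pow_le_prod_one_sub_pow {ι : Type*} (s : Finset ι) (n : ι → ℕ) {a b : ℝ}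
    (ha : 0 ≤ a) (hab : a ≤ b) (hb : b ≤ 1) :
    ∏ j ∈ s, (1 - b ^ n j) ≤ ∏ j ∈ s, (1 - a ^ n j) :=
  prod_le_prod (fun _ _ ↦ sub_nonneg.2 (pow_le_one₀ (ha.trans hab) hb))
    fun j _ ↦ sub_le_sub_left (pow_le_pow_left₀ ha hab (n j)) 1

theorem one_sub_pow_le_of_inv_le_mul {t ε : ℝ} {m : ℕ} (ht : t ≤ 1) (hε : 0 < ε)
    (h : ε⁻¹ ≤ m * t) : (1 - t) ^ m ≤ ε := by
  have hmt : 0 < (m : ℝ) * t := (inv_pos.2 hε).trans_le h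
  calc (1 - t) ^ m ≤ Real.exp (-t) ^ m :=
        pow_le_pow_left₀ (sub_nonneg.2 ht) (Real.one_sub_le_exp_neg t) m
    _ = (Real.exp (m * t))⁻¹ := by rw [← Real.exp_nat_mul, ← Real.exp_neg, mul_neg]
    _ ≤ (m * t)⁻¹ := inv_anti₀ hmt ((le_add_of_nonneg_right zero_le_one).trans (Real.add_one_le_exp _))
    _ ≤ ε := inv_le_of_inv_le₀ hε h

theorem one_sub_one_sub_pow_le_mul {t : ℝ} (ht : t ≤ 2) (m : ℕ) :
    1 - (1 - t) ^ m ≤ m * t := by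
  have := one_add_mul_le_pow (a := -t) (by linarith) m
  rw [← sub_eq_add_neg, mul_neg, ← sub_eq_add_neg] at this
  linarith

theorem exists_one_sub_pow_pow_le {a b ε : ℝ} (hb : 0 ≤ b) (hba : b < a) (ha : a ≤ 1)
    (hε : 0 < ε) : ∃ k m : ℕ, (1 - a ^ k) ^ m ≤ ε ∧ 1 - (1 - b ^ k) ^ m ≤ ε := by
  have ha0 : 0 < a := hb.trans_lt hba
  have hlim : Tendsto (fun k : ℕ ↦ (b / a) ^ k / ε + b ^ k) atTop (𝓝 0) := by
    simpa using ((tendsto_pow_atTop_nhds_zero_of_lt_one (div_nonneg hb ha0.le)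
      ((div_lt_one ha0).2 hba)).div_const ε).add
      (tendsto_pow_atTop_nhds_zero_of_lt_one hb (hba.trans_le ha))
  obtain ⟨k, hk⟩ := (hlim.eventually_le_const hε).exists
  have hak : 0 < a ^ k := pow_pos ha0 k
  set m := ⌈(ε * a ^ k)⁻¹⌉₊
  refine ⟨k, m, one_sub_pow_le_of_inv_le_mul (pow_le_one₀ ha0.le ha) hε ?_, ?_⟩
  · calc ε⁻¹ = (ε * a ^ k)⁻¹ * a ^ k := by field_simp
      _ ≤ m * a ^ k := mul_le_mul_of_nonneg_right (Nat.le_ceil _) hak.le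
  · calc 1 - (1 - b ^ k) ^ m ≤ m * b ^ k :=
          one_sub_one_sub_pow_le_mul ((pow_le_one₀ hb (hba.trans_le ha).le).trans one_le_two) m
      _ ≤ ((ε * a ^ k)⁻¹ + 1) * b ^ k :=
          mul_le_mul_of_nonneg_right (Nat.ceil_lt_add_one (by positivity)).le (by positivity)
      _ = (b / a) ^ k / ε + b ^ k := by rw [div_pow]; field_simp
      _ ≤ ε := hk

theorem stmt17 (x : ℝ) (hx0 : 0 < x) (hx1 : x < 1) :
    (∀ ε : ℝ, 0 < ε → ∃ (m : ℕ) (n : Fin m → ℕ),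
        ∏ j : Fin m, (1 - x ^ n j) ≤ ε ∧
          1 - ∏ j : Fin m, (1 - (1 - x) ^ n j) ≤ ε) ↔ 1 / 2 < x := by
  constructor
  · intro h
    by_contra! hx
    obtain ⟨m, n, hsmall, hlarge⟩ := h (1 / 3) (by norm_num)
    have := prod_one_sub_pow_le_prod_one_sub_pow univ n hx0.le (by linarith : x ≤ 1 - x)
      (by linarith)
    linarith
  · intro hx ε hε
    obtain ⟨k, m, hsmall, hlarge⟩ :=
      exists_one_sub_pow_pow_le (sub_nonneg.2 hx1.le) (by linarith) hx1.le hε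
    exact ⟨m, fun _ ↦ k, by simpa using hsmall, by simpa using hlarge⟩
end
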